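/- Energy stability of the second-order implicit and explicit schemes for the obstacle potential (Theorem 3.3, estimate (3.9)): assume γ ∈ L¹(G) is even and positive semidefinite and ξτ < 2. (i) If u* ∈ K minimizes J² over K (second-order implicit scheme), then E(u*) ≤ J²(u*) ≤ E(v). (ii) If u₁ ∈ K minimizes j[v] over K and u₂ ∈ K minimizes j[u₁] over K (explicit two-stage second-order scheme), then E(u₂) ≤ J²(u₂) ≤ E(v). -/

import Mathlib

open MeasureTheory

noncomputable section

/-- The `n`-dimensional torus: product of circles `ℝ/(Lᵢℤ)`. -/
abbrev Torus (n : ℕ) (L : Fin n → ℝ) := Π i : Fin n, AddCircle (L i)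

variable {n : ℕ} {L : Fin n → ℝ} [∀ i, Fact (0 < L i)]

/-- The `L²` inner product `(u,v) = ∫ u v`. -/
def ip (u v : Torus n L → ℝ) : ℝ := ∫ x, u x * v x

/-- The convolution `(γ*u)(x) = ∫ γ(x-y) u(y) dy`. -/
def conv (γ u : Torus n L → ℝ) : Torus n L → ℝ := fun x => ∫ y, γ (x - y) * u y

/-- `g(u) = (ξ/2)‖u‖² + c`. -/
def gfun (ξ c : ℝ) (u : Torus n L → ℝ) : ℝ := ξ / 2 * ip u u + c

/-- `f(u) = −(1/2)(γ*u, u)`. -/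
def ffun (γ : Torus n L → ℝ) (u : Torus n L → ℝ) : ℝ := -(1 / 2) * ip (conv γ u) u

/-- Energy for the obstacle potential: `E(u) = g(u) + f(u)`. -/
def energyObs (γ : Torus n L → ℝ) (ξ c : ℝ) (u : Torus n L → ℝ) : ℝ :=
  gfun ξ c u + ffun γ u

/-- Second-order implicit objective with previous iterate `v`:
`J²(u) = (1/(2τ))‖u−v‖² + (1/2)(g(v)+g(u)) + (1/2)(f(v)+f(u)) − (1/2)(γ*v, u−v) + (ξ/2)(v, u−v)`. -/
def objJ2 (γ : Torus n L → ℝ) (τ ξ c : ℝ) (v u : Torus n L → ℝ) : ℝ :=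
  1 / (2 * τ) * ip (u - v) (u - v) + 1 / 2 * (gfun ξ c v + gfun ξ c u)
    + 1 / 2 * (ffun γ v + ffun γ u) - 1 / 2 * ip (conv γ v) (u - v)
    + ξ / 2 * ip v (u - v)

/-- Fixed-point objective with previous iterate `v` and linearization point `ζ`:
`j[ζ](u) = (1/(2τ))‖u−v‖² + (1/2)(g(v)+g(u)) + (1/2)(f(v)+f(ζ)) − (1/2)(γ*v, u−v)
          + (ξ/2)(v, u−v) − (1/2)(γ*ζ, u−ζ)`. -/
def objSmall (γ : Torus n L → ℝ) (τ ξ c : ℝ) (v ζ u : Torus n L → ℝ) : ℝ :=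
  1 / (2 * τ) * ip (u - v) (u - v) + 1 / 2 * (gfun ξ c v + gfun ξ c u)
    + 1 / 2 * (ffun γ v + ffun γ ζ) - 1 / 2 * ip (conv γ v) (u - v)
    + ξ / 2 * ip v (u - v) - 1 / 2 * ip (conv γ ζ) (u - ζ)

/-- The admissible set for the obstacle potential: `K = {w ∈ L²(G) : |w| ≤ 1 a.e.}`. -/
def obstacleSet (n : ℕ) (L : Fin n → ℝ) [∀ i, Fact (0 < L i)] : Set (Torus n L → ℝ) :=
  {w | MemLp w 2 ∧ ∀ᵐ x, |w x| ≤ 1}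


/-! ### Auxiliary lemmas -/

open Filter

instance torusNegInv : (volume : Measure (Torus n L)).IsNegInvariant :=
  Measure.IsAddHaarMeasure.isNegInvariant_of_regular _

/-- Bounded a.e.-strongly-measurable functions on the torus. -/
def Bdd (w : Torus n L → ℝ) : Prop :=
  AEStronglyMeasurable w volume ∧ ∃ C : ℝ, ∀ᵐ x, ‖w x‖ ≤ C

lemma Bdd.sub {u w : Torus n L → ℝ} (hu : Bdd u) (hw : Bdd w) : Bdd (u - w) := by
  obtain ⟨hum, Cu, hCu⟩ := hu
  obtain ⟨hwm, Cw, hCw⟩ := hw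
  refine ⟨hum.sub hwm, Cu + Cw, ?_⟩
  filter_upwards [hCu, hCw] with x h1 h2
  calc ‖(u - w) x‖ = ‖u x - w x‖ := rfl
    _ ≤ ‖u x‖ + ‖w x‖ := norm_sub_le _ _
    _ ≤ Cu + Cw := add_le_add h1 h2

lemma Bdd.integrable_mul {u w : Torus n L → ℝ} (hu : Bdd u) (hw : Bdd w) :
    Integrable (fun x => u x * w x) := by
  obtain ⟨hum, Cu, hCu⟩ := hu
  obtain ⟨hwm, Cw, hCw⟩ := hw
  refine ⟨hum.mul hwm, HasFiniteIntegral.of_bounded (C := Cu * Cw) ?_⟩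
  filter_upwards [hCu, hCw] with x h1 h2
  calc ‖u x * w x‖ = ‖u x‖ * ‖w x‖ := norm_mul _ _
    _ ≤ Cu * Cw := mul_le_mul h1 h2 (norm_nonneg _) ((norm_nonneg (u x)).trans h1)

lemma ip_comm (u w : Torus n L → ℝ) : ip u w = ip w u := by
  simp only [ip, mul_comm]

lemma ip_zero_right (u : Torus n L → ℝ) : ip u 0 = 0 := by
  simp [ip]

lemma ip_nonneg_self (u : Torus n L → ℝ) : 0 ≤ ip u u :=
  integral_nonneg fun x => mul_self_nonneg _

lemma ip_sub_right {u w z : Torus n L → ℝ} (hu : Bdd u) (hw : Bdd w) (hz : Bdd z) :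
    ip u (w - z) = ip u w - ip u z := by
  simp only [ip, Pi.sub_apply, mul_sub]
  exact integral_sub (hu.integrable_mul hw) (hu.integrable_mul hz)

lemma ip_sub_left {u w z : Torus n L → ℝ} (hu : Bdd u) (hw : Bdd w) (hz : Bdd z) :
    ip (w - z) u = ip w u - ip z u := by
  simp only [ip, Pi.sub_apply, sub_mul]
  exact integral_sub (hw.integrable_mul hu) (hz.integrable_mul hu)

variable {γ : Torus n L → ℝ}

lemma integrable_shift (hγ : Integrable γ) (x : Torus n L) :
    Integrable (fun y => γ (x - y)) :=
  ((Measure.measurePreserving_sub_left (volume : Measure (Torus n L)) x).integrable_comp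
    hγ.aestronglyMeasurable).mpr hγ

lemma integral_shift (f : Torus n L → ℝ) (x : Torus n L) :
    ∫ y, f (x - y) = ∫ y, f y :=
  integral_sub_left_eq_self f volume x

lemma aesm_prod_sub (hγ : Integrable γ) :
    AEStronglyMeasurable (fun p : Torus n L × Torus n L => γ (p.1 - p.2))
      ((volume : Measure (Torus n L)).prod volume) :=
  hγ.aestronglyMeasurable.comp_quasiMeasurePreserving
    (quasiMeasurePreserving_sub volume volume)

lemma integrable_prod_shift (hγ : Integrable γ) :
    Integrable (fun p : Torus n L × Torus n L => γ (p.1 - p.2))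
      ((volume : Measure (Torus n L)).prod volume) := by
  rw [integrable_prod_iff (aesm_prod_sub hγ)]
  refine ⟨Eventually.of_forall fun x => integrable_shift hγ x, ?_⟩
  have h : (fun x : Torus n L => ∫ y, ‖γ (x - y)‖) = fun _ => ∫ y, ‖γ y‖ := by
    funext x
    exact integral_shift (fun t => ‖γ t‖) x
  rw [h]
  exact integrable_const _

lemma conv_integrand_integrable (hγ : Integrable γ) {w : Torus n L → ℝ} (hw : Bdd w)
    (x : Torus n L) : Integrable (fun y => γ (x - y) * w y) := by
  obtain ⟨hwm, C, hC⟩ := hw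
  refine Integrable.mono' (((integrable_shift hγ x).norm).const_mul C)
    ((integrable_shift hγ x).aestronglyMeasurable.mul hwm) ?_
  filter_upwards [hC] with y hy
  calc ‖γ (x - y) * w y‖ = ‖γ (x - y)‖ * ‖w y‖ := norm_mul _ _
    _ ≤ ‖γ (x - y)‖ * C := mul_le_mul_of_nonneg_left hy (norm_nonneg _)
    _ = C * ‖γ (x - y)‖ := mul_comm _ _

lemma conv_aesm (hγ : Integrable γ) {w : Torus n L → ℝ} (hw : Bdd w) :
    AEStronglyMeasurable (conv γ w) volume := by
  have h : AEStronglyMeasurable (fun p : Torus n L × Torus n L => γ (p.1 - p.2) * w p.2)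
      ((volume : Measure (Torus n L)).prod volume) :=
    (aesm_prod_sub hγ).mul
      (hw.1.comp_quasiMeasurePreserving Measure.quasiMeasurePreserving_snd)
  exact h.integral_prod_right'

lemma conv_bound (hγ : Integrable γ) {w : Torus n L → ℝ} {C : ℝ}
    (hwm : AEStronglyMeasurable w volume)
    (hC : ∀ᵐ x, ‖w x‖ ≤ C) (x : Torus n L) : ‖conv γ w x‖ ≤ C * ∫ y, ‖γ y‖ := by
  have h1 : ‖conv γ w x‖ ≤ ∫ y, ‖γ (x - y) * w y‖ := norm_integral_le_integral_norm _
  refine h1.trans ?_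
  have h2 : ∫ y, ‖γ (x - y) * w y‖ ≤ ∫ y, C * ‖γ (x - y)‖ := by
    refine integral_mono_ae (conv_integrand_integrable hγ ⟨hwm, C, hC⟩ x).norm
      (((integrable_shift hγ x).norm).const_mul C) ?_
    filter_upwards [hC] with y hy
    calc ‖γ (x - y) * w y‖ = ‖γ (x - y)‖ * ‖w y‖ := norm_mul _ _
      _ ≤ ‖γ (x - y)‖ * C := mul_le_mul_of_nonneg_left hy (norm_nonneg _)
      _ = C * ‖γ (x - y)‖ := mul_comm _ _
  refine h2.trans_eq ?_
  rw [integral_const_mul, integral_shift (fun t => ‖γ t‖) x]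

lemma conv_bdd (hγ : Integrable γ) {w : Torus n L → ℝ} (hw : Bdd w) : Bdd (conv γ w) := by
  obtain ⟨hwm, C, hC⟩ := hw
  exact ⟨conv_aesm hγ ⟨hwm, C, hC⟩, C * ∫ y, ‖γ y‖,
    Eventually.of_forall fun x => conv_bound hγ hwm hC x⟩

lemma conv_sub (hγ : Integrable γ) {u w : Torus n L → ℝ} (hu : Bdd u) (hw : Bdd w)
    (x : Torus n L) : conv γ (u - w) x = conv γ u x - conv γ w x := by
  simp only [conv, Pi.sub_apply, mul_sub]
  exact integral_sub (conv_integrand_integrable hγ hu x) (conv_integrand_integrable hγ hw x)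

lemma integrable_prod_triple (hγ : Integrable γ) {u w : Torus n L → ℝ} (hu : Bdd u)
    (hw : Bdd w) :
    Integrable (fun p : Torus n L × Torus n L => γ (p.1 - p.2) * u p.2 * w p.1)
      ((volume : Measure (Torus n L)).prod volume) := by
  obtain ⟨hum, Cu, hCu⟩ := hu
  obtain ⟨hwm, Cw, hCw⟩ := hw
  have haesm :
      AEStronglyMeasurable (fun p : Torus n L × Torus n L => γ (p.1 - p.2) * u p.2 * w p.1)
      ((volume : Measure (Torus n L)).prod volume) :=
    ((aesm_prod_sub hγ).mul
      (hum.comp_quasiMeasurePreserving Measure.quasiMeasurePreserving_snd)).mul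
      (hwm.comp_quasiMeasurePreserving Measure.quasiMeasurePreserving_fst)
  refine Integrable.mono' (((integrable_prod_shift hγ).norm).const_mul (Cu * Cw)) haesm ?_
  have h2 : ∀ᵐ p : Torus n L × Torus n L ∂((volume : Measure (Torus n L)).prod volume),
      ‖u p.2‖ ≤ Cu := Measure.QuasiMeasurePreserving.ae Measure.quasiMeasurePreserving_snd hCu
  have h1 : ∀ᵐ p : Torus n L × Torus n L ∂((volume : Measure (Torus n L)).prod volume),
      ‖w p.1‖ ≤ Cw := Measure.QuasiMeasurePreserving.ae Measure.quasiMeasurePreserving_fst hCw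
  filter_upwards [h1, h2] with p hp1 hp2
  have hCu0 : (0:ℝ) ≤ Cu := (norm_nonneg _).trans hp2
  have hCw0 : (0:ℝ) ≤ Cw := (norm_nonneg _).trans hp1
  calc ‖γ (p.1 - p.2) * u p.2 * w p.1‖ = ‖γ (p.1 - p.2)‖ * ‖u p.2‖ * ‖w p.1‖ := by
        rw [norm_mul, norm_mul]
    _ ≤ ‖γ (p.1 - p.2)‖ * Cu * Cw := by gcongr
    _ = Cu * Cw * ‖γ (p.1 - p.2)‖ := by ring

lemma ipconv_comm (hγ : Integrable γ) (hγeven : ∀ᵐ x, γ (-x) = γ x)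
    {u w : Torus n L → ℝ} (hu : Bdd u) (hw : Bdd w) :
    ip (conv γ u) w = ip (conv γ w) u := by
  have step1 : ip (conv γ u) w = ∫ x, ∫ y, γ (x - y) * u y * w x := by
    unfold ip conv
    congr 1
    funext x
    rw [← integral_mul_const]
  have hF : Integrable (Function.uncurry fun x y => γ (x - y) * u y * w x)
      ((volume : Measure (Torus n L)).prod volume) := integrable_prod_triple hγ hu hw
  have step2 : ∫ x, ∫ y, γ (x - y) * u y * w x = ∫ y, ∫ x, γ (x - y) * u y * w x :=
    integral_integral_swap hF
  have step3 : ∀ y, ∫ x, γ (x - y) * u y * w x = conv γ w y * u y := by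
    intro y
    have h1 : ∫ x, γ (x - y) * u y * w x = ∫ x, γ (x - y) * w x * u y := by
      congr 1; funext x; ring
    rw [h1, integral_mul_const]
    congr 1
    have heq : ∀ᵐ x, γ (x - y) * w x = γ (y - x) * w x := by
      have h2 : ∀ᵐ x, γ (-(x - y)) = γ (x - y) :=
        Measure.QuasiMeasurePreserving.ae
          (measurePreserving_sub_right (volume : Measure (Torus n L)) y).quasiMeasurePreserving
          hγeven
      filter_upwards [h2] with x hx
      rw [← hx, neg_sub]
    rw [integral_congr_ae heq]
    rfl
  rw [step1, step2]
  simp_rw [step3]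
  rfl

lemma J2_sub_energy (hγ : Integrable γ) (hγeven : ∀ᵐ x, γ (-x) = γ x)
    {u v : Torus n L → ℝ} (hu : Bdd u) (hv : Bdd v) (τ ξ c : ℝ) :
    objJ2 γ τ ξ c v u - energyObs γ ξ c u
      = (1 / (2 * τ) - ξ / 4) * ip (u - v) (u - v)
        + 1 / 4 * ip (conv γ (u - v)) (u - v) := by
  have huv : Bdd (u - v) := hu.sub hv
  have hcu : Bdd (conv γ u) := conv_bdd hγ hu
  have hcv : Bdd (conv γ v) := conv_bdd hγ hv
  have hcs : conv γ (u - v) = conv γ u - conv γ v := funext (conv_sub hγ hu hv)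
  have e1 : ip (u - v) (u - v) = ip u u - ip u v - (ip u v - ip v v) := by
    rw [ip_sub_left huv hu hv, ip_sub_right hu hu hv, ip_sub_right hv hu hv, ip_comm v u]
  have e2 : ip v (u - v) = ip u v - ip v v := by
    rw [ip_sub_right hv hu hv, ip_comm v u]
  have e3 : ip (conv γ v) (u - v) = ip (conv γ u) v - ip (conv γ v) v := by
    rw [ip_sub_right hcv hu hv, ipconv_comm hγ hγeven hv hu]
  have e4 : ip (conv γ (u - v)) (u - v)
      = ip (conv γ u) u - ip (conv γ u) v - (ip (conv γ u) v - ip (conv γ v) v) := by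
    rw [hcs, ip_sub_left huv hcu hcv, ip_sub_right hcu hu hv, ip_sub_right hcv hu hv,
      ipconv_comm hγ hγeven hv hu]
  unfold objJ2 energyObs gfun ffun
  rw [e1, e2, e3, e4]
  ring

lemma small_sub_J2 (hγ : Integrable γ) (hγeven : ∀ᵐ x, γ (-x) = γ x)
    {u v ζ : Torus n L → ℝ} (hu : Bdd u) (hζ : Bdd ζ) (τ ξ c : ℝ) :
    objSmall γ τ ξ c v ζ u - objJ2 γ τ ξ c v u
      = 1 / 4 * ip (conv γ (u - ζ)) (u - ζ) := by
  have huζ : Bdd (u - ζ) := hu.sub hζ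
  have hcu : Bdd (conv γ u) := conv_bdd hγ hu
  have hcζ : Bdd (conv γ ζ) := conv_bdd hγ hζ
  have hcs : conv γ (u - ζ) = conv γ u - conv γ ζ := funext (conv_sub hγ hu hζ)
  have e5 : ip (conv γ ζ) (u - ζ) = ip (conv γ u) ζ - ip (conv γ ζ) ζ := by
    rw [ip_sub_right hcζ hu hζ, ipconv_comm hγ hγeven hζ hu]
  have e6 : ip (conv γ (u - ζ)) (u - ζ)
      = ip (conv γ u) u - ip (conv γ u) ζ - (ip (conv γ u) ζ - ip (conv γ ζ) ζ) := by
    rw [hcs, ip_sub_left huζ hcu hcζ, ip_sub_right hcu hu hζ, ip_sub_right hcζ hu hζ,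
      ipconv_comm hγ hγeven hζ hu]
  unfold objSmall objJ2 ffun
  rw [e5, e6]
  ring

lemma objJ2_self (γ : Torus n L → ℝ) (τ ξ c : ℝ) (v : Torus n L → ℝ) :
    objJ2 γ τ ξ c v v = energyObs γ ξ c v := by
  unfold objJ2 energyObs
  rw [sub_self, ip_zero_right, ip_zero_right, ip_zero_right]
  ring

lemma objSmall_diag (γ : Torus n L → ℝ) (τ ξ c : ℝ) (v ζ : Torus n L → ℝ) :
    objSmall γ τ ξ c v ζ ζ = objJ2 γ τ ξ c v ζ := by
  unfold objSmall objJ2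
  rw [sub_self ζ, ip_zero_right]
  ring

lemma bdd_of_mem_obstacle {w : Torus n L → ℝ} (hw : w ∈ obstacleSet n L) : Bdd w :=
  ⟨hw.1.aestronglyMeasurable, 1, by simpa [Real.norm_eq_abs] using hw.2⟩

/-- **Energy stability of the second-order implicit and explicit schemes for the obstacle
potential** (Theorem 3.3, estimate (3.9)): assume `γ ∈ L¹` is even and positive semidefinite
and `ξτ < 2`. (i) If `u*` minimizes `J²` over `K`, then `E(u*) ≤ J²(u*) ≤ E(v)`.
(ii) If `u₁` minimizes `j[v]` over `K` and `u₂` minimizes `j[u₁]` over `K`, then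
`E(u₂) ≤ J²(u₂) ≤ E(v)`. -/
theorem energy_stability_second_order_obstacle
    {n : ℕ} (hn : 1 ≤ n) {L : Fin n → ℝ} [∀ i, Fact (0 < L i)]
    (γ : Torus n L → ℝ) (hγL1 : Integrable γ)
    (hγeven : ∀ᵐ x, γ (-x) = γ x)
    (hγpsd : ∀ w : Torus n L → ℝ, MemLp w 2 → 0 ≤ ip (conv γ w) w)
    (τ : ℝ) (hτ : 0 < τ) (ξ : ℝ) (hξ : 0 ≤ ξ) (hξτ : ξ * τ < 2) (c : ℝ)
    (v : Torus n L → ℝ) (hv : v ∈ obstacleSet n L) :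
    (∀ ustar ∈ obstacleSet n L,
        (∀ u ∈ obstacleSet n L, objJ2 γ τ ξ c v ustar ≤ objJ2 γ τ ξ c v u) →
        energyObs γ ξ c ustar ≤ objJ2 γ τ ξ c v ustar ∧
          objJ2 γ τ ξ c v ustar ≤ energyObs γ ξ c v) ∧
      (∀ u₁ ∈ obstacleSet n L, ∀ u₂ ∈ obstacleSet n L,
        (∀ u ∈ obstacleSet n L, objSmall γ τ ξ c v v u₁ ≤ objSmall γ τ ξ c v v u) →
        (∀ u ∈ obstacleSet n L, objSmall γ τ ξ c v u₁ u₂ ≤ objSmall γ τ ξ c v u₁ u) →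
        energyObs γ ξ c u₂ ≤ objJ2 γ τ ξ c v u₂ ∧
          objJ2 γ τ ξ c v u₂ ≤ energyObs γ ξ c v) := by
  have hcoeff : 0 ≤ 1 / (2 * τ) - ξ / 4 := by
    rw [sub_nonneg, div_le_div_iff₀ (by norm_num) (by linarith : (0:ℝ) < 2 * τ)]
    nlinarith
  have key : ∀ u ∈ obstacleSet n L, energyObs γ ξ c u ≤ objJ2 γ τ ξ c v u := by
    intro u hu
    have hd := J2_sub_energy hγL1 hγeven (bdd_of_mem_obstacle hu) (bdd_of_mem_obstacle hv) τ ξ c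
    have hA : 0 ≤ ip (conv γ (u - v)) (u - v) := hγpsd _ (hu.1.sub hv.1)
    have hI : 0 ≤ ip (u - v) (u - v) := ip_nonneg_self _
    nlinarith [mul_nonneg hcoeff hI]
  have key2 : ∀ ζ ∈ obstacleSet n L, ∀ u ∈ obstacleSet n L,
      objJ2 γ τ ξ c v u ≤ objSmall γ τ ξ c v ζ u := by
    intro ζ hζ u hu
    have hd := small_sub_J2 (v := v) hγL1 hγeven (bdd_of_mem_obstacle hu) (bdd_of_mem_obstacle hζ) τ ξ c
    have hA : 0 ≤ ip (conv γ (u - ζ)) (u - ζ) := hγpsd _ (hu.1.sub hζ.1)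
    linarith
  constructor
  · intro ustar hustar hmin
    refine ⟨key ustar hustar, ?_⟩
    calc objJ2 γ τ ξ c v ustar ≤ objJ2 γ τ ξ c v v := hmin v hv
      _ = energyObs γ ξ c v := objJ2_self γ τ ξ c v
  · intro u₁ hu₁ u₂ hu₂ hmin1 hmin2
    refine ⟨key u₂ hu₂, ?_⟩
    calc objJ2 γ τ ξ c v u₂ ≤ objSmall γ τ ξ c v u₁ u₂ := key2 u₁ hu₁ u₂ hu₂
      _ ≤ objSmall γ τ ξ c v u₁ u₁ := hmin2 u₁ hu₁
      _ = objJ2 γ τ ξ c v u₁ := objSmall_diag γ τ ξ c v u₁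
      _ ≤ objSmall γ τ ξ c v v u₁ := key2 v hv u₁ hu₁
      _ ≤ objSmall γ τ ξ c v v v := hmin1 v hv
      _ = objJ2 γ τ ξ c v v := objSmall_diag γ τ ξ c v v
      _ = energyObs γ ξ c v := objJ2_self γ τ ξ c v


end
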